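/- arXiv:1601.03511 — 2 statements merged into one kernel-verified Lean document; each statement's English description precedes it below -/
import Mathlib

section
/- Let n ≥ 15 be an integer and m an integer with n + 8 ≤ m ≤ min{⌊2n^{3/2}⌋, n(n-1)/2}. Then m/√(2m - (n-1)) > √(n-1) + (2m - 2(n-1))/(n√(n-1)). -/
lemma QUpos_aux (R : ℝ) (hR0 : 0 < R) (h15 : 15 ≤ R^2) :
    0 < 2*R^9 - R^8 - 18*R^7 - 17*R^6 + 40*R^5 - 94*R^4 - 168*R^3 + 120*R^2 - 688 := by
  have h38 : (3.87:ℝ) ≤ R := by nlinarith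
  nlinarith [pow_pos hR0 3, pow_pos hR0 4, pow_pos hR0 5, pow_pos hR0 6, pow_pos hR0 7,
    mul_le_mul_of_nonneg_left h15 (pow_pos hR0 7).le,
    mul_le_mul_of_nonneg_left h15 (pow_pos hR0 5).le,
    mul_le_mul_of_nonneg_left h15 (pow_pos hR0 3).le,
    mul_le_mul_of_nonneg_left h38 (pow_pos hR0 6).le]

lemma key_aux (a M R : ℝ) (ha : 14 ≤ a) (hR : R^2 = a+1) (hR0 : 0 < R)
    (h1 : a+9 ≤ M) (h2 : M ≤ 2*R^3) :
    (2*M-a)*(a^2-a+2*M)^2 < M^2*(a+1)^2*a := by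
  have h38 : (3.87:ℝ) ≤ R := by nlinarith
  have hQlo : (0:ℝ) < 14*a^3 - 112*a^2 - 198*a - 1944 := by nlinarith
  have hQhi : (0:ℝ) < -8*((2*R^3)^2+(2*R^3)*(a+9)+(a+9)^2) + (a^3-6*a^2+13*a)*(2*R^3+(a+9)) + (-2*a^4+8*a^3-6*a^2) := by
    have ha' : a = R^2 - 1 := by linarith
    have := QUpos_aux R hR0 (by nlinarith)
    rw [ha']; nlinarith [this]
  have hML : 0 ≤ M - (a+9) := by linarith
  have hUM : 0 ≤ 2*R^3 - M := by linarith
  have hUL : 0 < 2*R^3 - (a+9) := by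
    have h3 : 3.87*R^2 ≤ R*R^2 := mul_le_mul_of_nonneg_right h38 (sq_nonneg R)
    nlinarith
  have hQMs : 0 ≤ (-8*(M^2+M*(a+9)+(a+9)^2) + (a^3-6*a^2+13*a)*(M+(a+9)) + (-2*a^4+8*a^3-6*a^2)) * (2*R^3 - (a+9)) := by
    nlinarith [mul_nonneg hUM hQlo.le, mul_nonneg hML hQhi.le,
      mul_nonneg (mul_nonneg hML hUM) hUL.le]
  have hQM : 0 ≤ -8*(M^2+M*(a+9)+(a+9)^2) + (a^3-6*a^2+13*a)*(M+(a+9)) + (-2*a^4+8*a^3-6*a^2) := by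
    nlinarith [hQMs, hUL]
  have hF0 : (0:ℝ) < 45*a^3 - 522*a^2 - 891*a - 5832 := by nlinarith
  nlinarith [mul_nonneg hML hQM, hF0]

theorem stmt_6 (n m : ℤ) (hn : 15 ≤ n) (hm1 : n + 8 ≤ m)
    (hm2 : m ≤ min ⌊2*(n:ℝ)^((3:ℝ)/2)⌋ (n*(n - 1)/2)) :
    (m:ℝ) / Real.sqrt (2*(m:ℝ) - ((n:ℝ) - 1)) >
      Real.sqrt ((n:ℝ) - 1) + (2*(m:ℝ) - 2*((n:ℝ) - 1)) / ((n:ℝ) * Real.sqrt ((n:ℝ) - 1)) := by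
  set N : ℝ := (n:ℝ) with hN
  set M : ℝ := (m:ℝ) with hM
  have hN15 : (15:ℝ) ≤ N := by rw [hN]; exact_mod_cast hn
  have hMlb : N + 8 ≤ M := by rw [hN, hM]; exact_mod_cast hm1
  have hMub : M ≤ 2 * Real.sqrt N ^ 3 := by
    have h1 : m ≤ ⌊2*(n:ℝ)^((3:ℝ)/2)⌋ := le_trans hm2 (min_le_left _ _)
    have h2 : M ≤ 2*(n:ℝ)^((3:ℝ)/2) := Int.le_floor.mp h1
    have h3 : (n:ℝ)^((3:ℝ)/2) = Real.sqrt N ^ 3 := by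
      rw [show (3:ℝ)/2 = (1/2)*3 by ring, Real.rpow_mul (by positivity),
        ← Real.sqrt_eq_rpow, show (3:ℝ) = ((3:ℕ):ℝ) by norm_num, Real.rpow_natCast]
    rw [← h3]; exact h2
  have hR : (Real.sqrt N)^2 = (N-1)+1 := by
    rw [Real.sq_sqrt (by linarith)]; ring
  have hkey := key_aux (N-1) M (Real.sqrt N) (by linarith) hR
    (Real.sqrt_pos.mpr (by linarith)) (by linarith) hMub
  have hs0 : 0 < Real.sqrt (N-1) := Real.sqrt_pos.mpr (by linarith)
  have hu0 : 0 < Real.sqrt (2*M - (N-1)) := Real.sqrt_pos.mpr (by linarith)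
  have hs : Real.sqrt (N-1)^2 = N-1 := Real.sq_sqrt (by linarith)
  have hu : Real.sqrt (2*M - (N-1))^2 = 2*M - (N-1) := Real.sq_sqrt (by linarith)
  have hN0 : (0:ℝ) < N := by linarith
  rw [gt_iff_lt, show Real.sqrt (N-1) + (2*M - 2*(N-1)) / (N * Real.sqrt (N-1))
      = (N*(N-1) + (2*M - 2*(N-1))) / (N * Real.sqrt (N-1)) by
    field_simp; nlinarith [hs]]
  rw [div_lt_div_iff₀ (by positivity) hu0]
  have hpow : ((N*(N-1) + (2*M - 2*(N-1))) * Real.sqrt (2*M - (N-1)))^2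
      < (M * (N * Real.sqrt (N-1)))^2 := by
    have e1 : ((N*(N-1) + (2*M - 2*(N-1))) * Real.sqrt (2*M - (N-1)))^2
        = (N*(N-1) + (2*M - 2*(N-1)))^2 * (2*M - (N-1)) := by rw [mul_pow, hu]
    have e2 : (M * (N * Real.sqrt (N-1)))^2 = M^2 * N^2 * (N-1) := by
      rw [mul_pow, mul_pow, hs]; ring
    rw [e1, e2]; nlinarith [hkey]
  have hnn : 0 ≤ M * (N * Real.sqrt (N-1)) := mul_nonneg (by linarith) (by positivity)
  exact lt_of_pow_lt_pow_left₀ 2 hnn hpow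
end

section
/- Let n ≥ 4 be an integer, 1 ≤ k ≤ 10 an integer. Suppose real numbers R and R' satisfy R' > √(n-2) + 2(k+1)/((n-1)√(n-2)) and R = (√(n-2)/√(n-1))·R' + 1/√(n-1) + (1 - √(n-2)/√(n-1))·L for some real L ≥ 0. Then R > √(n-1) + 2(k+1)/(n√(n-1)). -/
theorem stmt_14 (n k : ℤ) (hn : 4 ≤ n) (hk1 : 1 ≤ k) (hk2 : k ≤ 10)
    (R R' L : ℝ) (hL : 0 ≤ L)
    (hR' : R' > Real.sqrt ((n:ℝ) - 2) + 2*((k:ℝ) + 1)/(((n:ℝ) - 1)*Real.sqrt ((n:ℝ) - 2)))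
    (hR : R = (Real.sqrt ((n:ℝ) - 2)/Real.sqrt ((n:ℝ) - 1))*R' + 1/Real.sqrt ((n:ℝ) - 1)
            + (1 - Real.sqrt ((n:ℝ) - 2)/Real.sqrt ((n:ℝ) - 1))*L) :
    R > Real.sqrt ((n:ℝ) - 1) + 2*((k:ℝ) + 1)/((n:ℝ)*Real.sqrt ((n:ℝ) - 1)) := by
  have hN : (4:ℝ) ≤ (n:ℝ) := by exact_mod_cast hn
  set a := Real.sqrt ((n:ℝ)-2) with ha_def
  set b := Real.sqrt ((n:ℝ)-1) with hb_def
  have ha : 0 < a := Real.sqrt_pos.mpr (by linarith)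
  have hb : 0 < b := Real.sqrt_pos.mpr (by linarith)
  have ha2 : a^2 = (n:ℝ)-2 := Real.sq_sqrt (by linarith)
  have hb2 : b^2 = (n:ℝ)-1 := Real.sq_sqrt (by linarith)
  have hab : a ≤ b := Real.sqrt_le_sqrt (by linarith)
  have hkR : (2:ℝ) ≤ (k:ℝ)+1 := by
    have : (1:ℝ) ≤ (k:ℝ) := by exact_mod_cast hk1
    linarith
  have hcoef : 0 ≤ (1 - a/b)*L := by
    apply mul_nonneg _ hL
    rw [sub_nonneg]
    exact div_le_one_of_le₀ hab hb.le
  have h1 : R ≥ (a/b)*R' + 1/b := by linarith [hR]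
  have h2 : (a/b)*R' > (a/b)*(a + 2*((k:ℝ)+1)/(((n:ℝ)-1)*a)) :=
    (mul_lt_mul_iff_right₀ (div_pos ha hb)).mpr hR'
  have key : (a/b)*(a + 2*((k:ℝ)+1)/(((n:ℝ)-1)*a)) + 1/b
      = b + 2*((k:ℝ)+1)/(((n:ℝ)-1)*b) := by
    have hn1 : ((n:ℝ)-1) ≠ 0 := by linarith
    have e1 : (a/b)*(a + 2*((k:ℝ)+1)/(((n:ℝ)-1)*a)) + 1/b
        = (a^2+1)/b + 2*((k:ℝ)+1)/(((n:ℝ)-1)*b) := by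
      field_simp
      ring
    have e2 : (a^2+1)/b = b := by
      rw [show a^2+1 = b^2 by linarith]
      rw [sq, mul_div_assoc, div_self hb.ne', mul_one]
    rw [e1, e2]
  have h3 : 2*((k:ℝ)+1)/(((n:ℝ)-1)*b) ≥ 2*((k:ℝ)+1)/((n:ℝ)*b) := by
    gcongr
    · exact mul_pos (by linarith : (0:ℝ) < (n:ℝ)-1) hb
    · linarith
  linarith
end
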